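/- Let H be a weakly norming graph and let ‖W‖ := t(H,|W|)^{1/e(H)}. For each ε ∈ (0,1), the modulus of convexity of the space (W_{r(H)}, ‖·‖) satisfies δ(ε) = 0; in particular, the space is not uniformly convex. -/

import Mathlib

open MeasureTheory

noncomputable def sym2Val {V Ω : Type*} (W : Ω → Ω → ℝ) (x : V → Ω) : Sym2 V → ℝ :=
  Sym2.lift ⟨fun i j => (W (x i) (x j) + W (x j) (x i)) / 2, fun i j => by simp [add_comm]⟩

/-- Homomorphism density `t(G, W)` of a graph `G` in a symmetric kernel `W`. -/
noncomputable def homDensity {V : Type} [Fintype V] {Ω : Type*} [MeasurableSpace Ω]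
    (G : SimpleGraph V) (μ : Measure Ω) (W : Ω → Ω → ℝ) : ℝ :=
  ∫ x : V → Ω, ∏ᶠ e ∈ G.edgeSet, sym2Val W x e ∂(Measure.pi fun _ => μ)

/-- Decorated homomorphism density `t(G, w)` for a decoration `w` of the edges. -/
noncomputable def decDensity {V : Type} [Fintype V] {Ω : Type*} [MeasurableSpace Ω]
    (G : SimpleGraph V) (μ : Measure Ω) (w : Sym2 V → Ω → Ω → ℝ) : ℝ :=
  ∫ x : V → Ω, ∏ᶠ e ∈ G.edgeSet, sym2Val (w e) x e ∂(Measure.pi fun _ => μ)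

/-- Bounded symmetric measurable kernel. -/
def GoodKernel {Ω : Type*} [MeasurableSpace Ω] (W : Ω → Ω → ℝ) : Prop :=
  Measurable (Function.uncurry W) ∧ (∀ x y, W x y = W y x) ∧ ∃ C, ∀ x y, |W x y| ≤ C

/-- Hatami's Hölder-type characterisation of weakly norming graphs. -/
def WeaklyNorming {V : Type} [Fintype V] (G : SimpleGraph V) : Prop :=
  ∀ (Ω : Type) (_ : MeasurableSpace Ω) (μ : Measure Ω), IsProbabilityMeasure μ →
    ∀ w : Sym2 V → Ω → Ω → ℝ, (∀ e, GoodKernel (w e)) → (∀ e x y, 0 ≤ w e x y) →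
      decDensity G μ w ^ G.edgeSet.ncard ≤ ∏ᶠ e ∈ G.edgeSet, homDensity G μ (w e)

/-- Hatami's Hölder-type characterisation of seminorming graphs. -/
def Seminorming {V : Type} [Fintype V] (G : SimpleGraph V) : Prop :=
  ∀ (Ω : Type) (_ : MeasurableSpace Ω) (μ : Measure Ω), IsProbabilityMeasure μ →
    ∀ w : Sym2 V → Ω → Ω → ℝ, (∀ e, GoodKernel (w e)) →
      decDensity G μ w ^ G.edgeSet.ncard ≤ ∏ᶠ e ∈ G.edgeSet, |homDensity G μ (w e)|

/-- Norming: seminorming and `‖·‖_H` vanishes only on a.e.-zero kernels. -/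
def Norming {V : Type} [Fintype V] (G : SimpleGraph V) : Prop :=
  Seminorming G ∧
    ∀ (Ω : Type) (_ : MeasurableSpace Ω) (μ : Measure Ω), IsProbabilityMeasure μ →
      ∀ W : Ω → Ω → ℝ, GoodKernel W → homDensity G μ W = 0 →
        ∀ᵐ p ∂(μ.prod μ), W p.1 p.2 = 0

/-- The weak graph norm `‖W‖_{r(H)} = t(H, |W|)^{1/e(H)}` on kernels over `[0,1]`. -/
noncomputable def rnorm {V : Type} [Fintype V] (H : SimpleGraph V) (W : ℝ → ℝ → ℝ) : ℝ :=
  homDensity H (MeasureTheory.volume.restrict (Set.Icc (0:ℝ) 1)) (fun x y => |W x y|)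
    ^ ((1 : ℝ) / (H.edgeSet.ncard : ℝ))

/-!
Fix `N` and label the `2ᴺ` intervals of length `2⁻ᴺ` in `[0,1]` bijectively by `𝔽₂ᴺ`,
`x ↦ b(x)`. The kernel `σ(x, y) = (-1) ^ ⟨b(x), b(y)⟩` is quasirandom: for a nonempty loopless
edge set `F` its density factorises over the coordinates, `t(F, σ) = t(F, σ₁) ^ N`, and
`|t(F, σ₁)| ≤ 1 - 2 ^ (1 - |V|)`. Expanding the product over the edges, `t(H, 1 ± ε σ) → 1` as
`N → ∞`. Normalising `1 + ε σ` and `1 - ε σ` to unit norm gives kernels whose difference has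
modulus about `2ε` everywhere and whose average is about `1` everywhere, so `‖W₁ - W₂‖ ≥ ε`
while `‖(W₁ + W₂) / 2‖ → 1`.
-/

open Finset
open scoped BigOperators ENNReal

section Sym2Val

variable {V Ω : Type*}

lemma sym2Val_of_symm {W : Ω → Ω → ℝ} (hW : ∀ a b, W a b = W b a) (x : V → Ω) (u v : V) :
    sym2Val W x s(u, v) = W (x u) (x v) := by
  change (W (x u) (x v) + W (x v) (x u)) / 2 = _
  rw [hW (x v)]; ring

lemma sym2Val_comp {α : Type*} (G : α → α → ℝ) (p : Ω → α) (x : V → Ω) (e : Sym2 V) :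
    sym2Val (fun a b => G (p a) (p b)) x e = sym2Val G (p ∘ x) e := by
  induction e using Sym2.ind with | _ u v => rfl

lemma sym2Val_const_add_mul (c d : ℝ) (W : Ω → Ω → ℝ) (x : V → Ω) (e : Sym2 V) :
    sym2Val (fun a b => c + d * W a b) x e = c + d * sym2Val W x e := by
  induction e using Sym2.ind with
  | _ u v => change (_ + _) / 2 = c + d * ((_ + _) / 2); ring

lemma sym2Val_const_mul (c : ℝ) (W : Ω → Ω → ℝ) (x : V → Ω) (e : Sym2 V) :
    sym2Val (fun a b => c * W a b) x e = c * sym2Val W x e := by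
  induction e using Sym2.ind with
  | _ u v => change (_ + _) / 2 = c * ((_ + _) / 2); ring

lemma le_sym2Val {c : ℝ} {W : Ω → Ω → ℝ} (hW : ∀ a b, c ≤ W a b) (x : V → Ω) (e : Sym2 V) :
    c ≤ sym2Val W x e := by
  induction e using Sym2.ind with
  | _ u v => change c ≤ (_ + _) / 2; linarith [hW (x u) (x v), hW (x v) (x u)]

lemma sym2Val_pi {ι : Type*} [Fintype ι] {G : Ω → Ω → ℝ} (hG : ∀ a b, G a b = G b a)
    (β : V → ι → Ω) (e : Sym2 V) :
    sym2Val (fun a b => ∏ i, G (a i) (b i)) β e = ∏ i, sym2Val G (fun v => β v i) e := by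
  induction e using Sym2.ind with
  | _ u v =>
    rw [sym2Val_of_symm (fun a b => prod_congr rfl fun i _ => hG (a i) (b i))]
    exact prod_congr rfl fun i _ => (sym2Val_of_symm hG (fun v => β v i) u v).symm

end Sym2Val

noncomputable def finHomDensity {V α : Type*} [Fintype V] [DecidableEq V] [Fintype α]
    (F : Finset (Sym2 V)) (G : α → α → ℝ) : ℝ :=
  𝔼 β : V → α, ∏ e ∈ F, sym2Val G β e

section FinHomDensity

variable {V α : Type*} [Fintype V] [DecidableEq V] [Fintype α]

lemma finHomDensity_empty (G : α → α → ℝ) [Nonempty α] :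
    finHomDensity (∅ : Finset (Sym2 V)) G = 1 := by
  simp [finHomDensity]

lemma finHomDensity_one_add_mul (E : Finset (Sym2 V)) (τ : ℝ) (G : α → α → ℝ) :
    finHomDensity E (fun a b => 1 + τ * G a b) =
      ∑ F ∈ E.powerset, τ ^ #F * finHomDensity F G := by
  simp only [finHomDensity, sym2Val_const_add_mul, prod_one_add, mul_expect, prod_mul_distrib,
    prod_const]
  exact expect_sum_comm _ _ _

lemma abs_finHomDensity_one_add_mul_sub_one_le [Nonempty α] {E : Finset (Sym2 V)} {τ b : ℝ}
    {G : α → α → ℝ} (hτ : |τ| ≤ 1) (hb0 : 0 ≤ b)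
    (hb : ∀ F ⊆ E, F.Nonempty → |finHomDensity F G| ≤ b) :
    |finHomDensity E (fun a b => 1 + τ * G a b) - 1| ≤ 2 ^ #E * b := by
  classical
  rw [finHomDensity_one_add_mul, ← sum_erase_add _ _ (empty_mem_powerset E), card_empty,
    pow_zero, one_mul, finHomDensity_empty, add_sub_cancel_right]
  have hterm : ∀ F ∈ E.powerset.erase ∅, |τ ^ #F * finHomDensity F G| ≤ b := fun F hF => by
    obtain ⟨hF, hFE⟩ := mem_erase.1 hF
    rw [abs_mul, abs_pow]
    calc |τ| ^ #F * |finHomDensity F G| ≤ 1 * b :=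
          mul_le_mul (pow_le_one₀ (abs_nonneg τ) hτ)
            (hb F (mem_powerset.1 hFE) (nonempty_iff_ne_empty.2 hF)) (abs_nonneg _) zero_le_one
      _ = b := one_mul b
  calc |∑ F ∈ E.powerset.erase ∅, τ ^ #F * finHomDensity F G|
      ≤ ∑ F ∈ E.powerset.erase ∅, b := (abs_sum_le_sum_abs _ _).trans (sum_le_sum hterm)
    _ ≤ ∑ F ∈ E.powerset, b := sum_le_sum_of_subset_of_nonneg (erase_subset _ _) fun _ _ _ => hb0
    _ = 2 ^ #E * b := by rw [sum_const, card_powerset, nsmul_eq_mul]; push_cast; ring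

lemma finHomDensity_pi {ι : Type*} [Fintype ι] [DecidableEq ι] {G : α → α → ℝ}
    (hG : ∀ a b, G a b = G b a) (F : Finset (Sym2 V)) :
    finHomDensity F (fun a b : ι → α => ∏ i, G (a i) (b i)) =
      finHomDensity F G ^ Fintype.card ι := by
  classical
  calc finHomDensity F (fun a b : ι → α => ∏ i, G (a i) (b i))
      = 𝔼 γ : ι → V → α, ∏ i, ∏ e ∈ F, sym2Val G (γ i) e :=
        Fintype.expect_equiv (Equiv.piComm fun _ _ => α) _
          (fun γ => ∏ i, ∏ e ∈ F, sym2Val G (γ i) e) fun β => by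
          simp only [sym2Val_pi hG]
          exact prod_comm
    _ = ∏ _i : ι, finHomDensity F G := by
        rw [Fintype.expect_eq_sum_div_card,
          ← Fintype.prod_sum fun (_ : ι) (β : V → α) => ∏ e ∈ F, sym2Val G β e]
        simp only [finHomDensity, Fintype.expect_eq_sum_div_card,
          prod_div_distrib, Fintype.card_pi, prod_const, card_univ, Nat.cast_pow]
    _ = finHomDensity F G ^ Fintype.card ι := by rw [prod_const, card_univ]

end FinHomDensity

lemma abs_sum_le_card_sub_two {Ω : Type*} [Fintype Ω] {f : Ω → ℝ} (hf : ∀ ω, |f ω| ≤ 1)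
    {ω₀ ω₁ : Ω} (h₀ : f ω₀ = 1) (h₁ : f ω₁ = -1) : |∑ ω, f ω| ≤ Fintype.card Ω - 2 := by
  have hf' := fun ω => abs_le.1 (hf ω)
  have hadd : 1 + f ω₀ ≤ ∑ ω, (1 + f ω) :=
    single_le_sum (f := fun ω => 1 + f ω) (fun ω _ => by linarith [(hf' ω).1]) (mem_univ ω₀)
  have hsub : 1 - f ω₁ ≤ ∑ ω, (1 - f ω) :=
    single_le_sum (f := fun ω => 1 - f ω) (fun ω _ => by linarith [(hf' ω).2]) (mem_univ ω₁)
  rw [sum_add_distrib] at hadd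
  rw [sum_sub_distrib] at hsub
  simp only [sum_const, card_univ, nsmul_eq_mul, mul_one] at hadd hsub
  exact abs_le.2 ⟨by linarith, by linarith⟩

def bitSign (s t : Bool) : ℝ := if s && t then -1 else 1

/-- The kernel `(-1) ^ ⟨a, b⟩` on `𝔽₂ᴺ`, a tensor power of `bitSign`. -/
def innerSign (N : ℕ) (a b : Fin N → Bool) : ℝ := ∏ i, bitSign (a i) (b i)

lemma bitSign_comm (s t : Bool) : bitSign s t = bitSign t s := by
  rw [bitSign, bitSign, Bool.and_comm]

lemma abs_bitSign (s t : Bool) : |bitSign s t| = 1 := by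
  rw [bitSign]; split_ifs <;> simp

lemma innerSign_comm (N : ℕ) (a b : Fin N → Bool) : innerSign N a b = innerSign N b a :=
  prod_congr rfl fun i _ => bitSign_comm (a i) (b i)

lemma abs_innerSign (N : ℕ) (a b : Fin N → Bool) : |innerSign N a b| = 1 := by
  rw [innerSign, abs_prod, prod_congr rfl fun i _ => abs_bitSign (a i) (b i), prod_const_one]

lemma innerSign_eq_one_or_eq_neg_one (N : ℕ) (a b : Fin N → Bool) :
    innerSign N a b = 1 ∨ innerSign N a b = -1 :=
  (abs_eq zero_le_one).1 (abs_innerSign N a b)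

section BitSign

variable {V : Type*}

lemma abs_sym2Val_bitSign (β : V → Bool) (e : Sym2 V) : |sym2Val bitSign β e| = 1 := by
  induction e using Sym2.ind with
  | _ u v => rw [sym2Val_of_symm bitSign_comm, abs_bitSign]

lemma sym2Val_bitSign_false (e : Sym2 V) : sym2Val bitSign (fun _ => false) e = 1 := by
  induction e using Sym2.ind with
  | _ u v => rw [sym2Val_of_symm bitSign_comm]; rfl

lemma sym2Val_bitSign_mem [DecidableEq V] {e₀ e : Sym2 V} (he : ¬ e.IsDiag) :
    sym2Val bitSign (fun v => decide (v ∈ e₀)) e = if e = e₀ then -1 else 1 := by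
  induction e using Sym2.ind with
  | _ u v =>
    simp only [sym2Val_of_symm bitSign_comm, bitSign, Bool.and_eq_true, decide_eq_true_eq,
      Sym2.mem_and_mem_iff (Sym2.mk_isDiag_iff.not.1 he), @eq_comm _ e₀]

/-- Colouring the two ends of an edge `e₀ ∈ F` flips the sign of the product, so the density
misses `±1` by at least two of the `2 ^ |V|` colourings. -/
lemma abs_finHomDensity_bitSign_le [Fintype V] [DecidableEq V] {F : Finset (Sym2 V)}
    {e₀ : Sym2 V} (he₀ : e₀ ∈ F) (hF : ∀ e ∈ F, ¬ e.IsDiag) :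
    |finHomDensity F bitSign| ≤ 1 - 2 / 2 ^ Fintype.card V := by
  have hcard : (Fintype.card (V → Bool) : ℝ) = 2 ^ Fintype.card V := by simp
  have hsum := abs_sum_le_card_sub_two (f := fun β : V → Bool => ∏ e ∈ F, sym2Val bitSign β e)
    (ω₀ := fun _ => false) (ω₁ := fun v => decide (v ∈ e₀))
    (fun β => by rw [abs_prod, prod_congr rfl fun e _ => abs_sym2Val_bitSign β e, prod_const_one])
    (prod_eq_one fun e _ => sym2Val_bitSign_false e)
    (by rw [prod_congr rfl fun e he => sym2Val_bitSign_mem (hF e he), prod_ite_eq' F e₀,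
      if_pos he₀])
  rw [hcard] at hsum
  rw [finHomDensity, Fintype.expect_eq_sum_div_card, hcard, abs_div,
    abs_of_pos (by positivity : (0 : ℝ) < 2 ^ Fintype.card V), le_sub_iff_add_le,
    ← add_div, div_le_one (by positivity)]
  linarith

lemma abs_finHomDensity_one_add_mul_innerSign_sub_one_le [Fintype V] [DecidableEq V] [Nonempty V]
    {E : Finset (Sym2 V)} (hE : ∀ e ∈ E, ¬ e.IsDiag) {τ : ℝ} (hτ : |τ| ≤ 1) (N : ℕ) :
    |finHomDensity E (fun a b => 1 + τ * innerSign N a b) - 1| ≤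
      2 ^ #E * (1 - 2 / 2 ^ Fintype.card V) ^ N := by
  have hq : 0 ≤ 1 - 2 / (2 : ℝ) ^ Fintype.card V := by
    rw [sub_nonneg, div_le_one (by positivity)]
    exact le_self_pow₀ one_le_two Fintype.card_ne_zero
  refine abs_finHomDensity_one_add_mul_sub_one_le hτ (pow_nonneg hq N) fun F hFE ⟨e₀, he₀⟩ => ?_
  rw [show finHomDensity F (innerSign N) = _ from finHomDensity_pi bitSign_comm F,
    Fintype.card_fin, abs_pow]
  exact pow_le_pow_left₀ (abs_nonneg _)
    (abs_finHomDensity_bitSign_le he₀ fun e he => hE e (hFE he)) N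

end BitSign

lemma homDensity_comp {V : Type} [Fintype V] [DecidableEq V] (H : SimpleGraph V)
    [Fintype H.edgeSet] {Ω α : Type*} [MeasurableSpace Ω] [Fintype α] [MeasurableSpace α]
    [MeasurableSingletonClass α] {μ : Measure Ω} [IsFiniteMeasure μ] {p : Ω → α}
    (hp : Measurable p) (hfib : ∀ a, μ (p ⁻¹' {a}) = (Fintype.card α : ℝ≥0∞)⁻¹)
    (G : α → α → ℝ) :
    homDensity H μ (fun x y => G (p x) (p y)) = finHomDensity H.edgeFinset G := by
  set f : (V → α) → ℝ := fun β => ∏ e ∈ H.edgeFinset, sym2Val G β e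
  have hpi : MeasurePreserving (fun (x : V → Ω) v => p (x v)) (Measure.pi fun _ => μ)
      (Measure.pi fun _ => μ.map p) :=
    measurePreserving_pi _ _ fun _ => hp.measurePreserving μ
  have hsingleton : ∀ β : V → α,
      (Measure.pi fun _ => μ.map p).real {β} = (Fintype.card (V → α) : ℝ)⁻¹ := fun β => by
    simp [measureReal_def, Measure.pi_singleton, Measure.map_apply hp, hfib]
  calc homDensity H μ (fun x y => G (p x) (p y))
      = ∫ x, f (fun v => p (x v)) ∂(Measure.pi fun _ => μ) := by
        simp only [homDensity, finprod_mem_eq_toFinset_prod, sym2Val_comp]; rfl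
    _ = ∫ β, f β ∂(Measure.pi fun _ => μ.map p) := by
        rw [← hpi.map_eq, integral_map hpi.measurable.aemeasurable
          Measurable.of_discrete.aestronglyMeasurable]
    _ = finHomDensity H.edgeFinset G := by
        simp only [integral_fintype Integrable.of_finite, hsingleton, smul_eq_mul, inv_mul_eq_div,
          ← sum_div, finHomDensity, Fintype.expect_eq_sum_div_card, f]

lemma setOf_ofNat_floor_eq_inter_Ico {M : ℕ} [NeZero M] (j : Fin M) :
    {x : ℝ | Fin.ofNat M ⌊x * M⌋₊ = j} ∩ Set.Ico 0 1 = Set.Ico (j / M : ℝ) ((j + 1) / M) := by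
  have hM : (0 : ℝ) < M := Nat.cast_pos.2 (Nat.pos_of_neZero M)
  ext x
  simp only [Set.mem_inter_iff, Set.mem_ofPred_eq, Set.mem_Ico, div_le_iff₀ hM, lt_div_iff₀ hM]
  constructor
  · rintro ⟨hj, hx0, hx1⟩
    have hxM : 0 ≤ x * M := by positivity
    have hlt : ⌊x * M⌋₊ < M := (Nat.floor_lt hxM).2 (by nlinarith)
    rw [Fin.ext_iff, Fin.val_ofNat, Nat.mod_eq_of_lt hlt] at hj
    rw [← hj]
    exact ⟨Nat.floor_le hxM, Nat.lt_floor_add_one _⟩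
  · rintro ⟨hjx, hxj⟩
    have hx0 : 0 ≤ x := nonneg_of_mul_nonneg_left (le_trans (by positivity) hjx) hM
    have hfloor : ⌊x * M⌋₊ = j := (Nat.floor_eq_iff (by positivity)).2 ⟨hjx, hxj⟩
    have hj1 : ((j : ℕ) : ℝ) + 1 ≤ M := by exact_mod_cast j.isLt
    exact ⟨by rw [hfloor, Fin.ofNat_val_eq_self], hx0, by nlinarith⟩

/-- The unit interval cut into `|α|` intervals of equal length, labelled by `α`. -/
lemma exists_measurable_fiber_eq_inv_card (α : Type*) [Fintype α] [Nonempty α]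
    [MeasurableSpace α] [MeasurableSingletonClass α] :
    ∃ p : ℝ → α, Measurable p ∧
      ∀ a, volume.restrict (Set.Icc (0 : ℝ) 1) (p ⁻¹' {a}) = (Fintype.card α : ℝ≥0∞)⁻¹ := by
  set M := Fintype.card α
  have : NeZero M := ⟨Fintype.card_ne_zero⟩
  let e := Fintype.equivFin α
  have hp : Measurable fun x : ℝ => e.symm (Fin.ofNat M ⌊x * M⌋₊) :=
    (measurable_from_nat (f := fun n => e.symm (Fin.ofNat M n))).comp
      (measurable_id.mul_const _).nat_floor
  refine ⟨_, hp, fun a => ?_⟩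
  have hfib : (fun x : ℝ => e.symm (Fin.ofNat M ⌊x * M⌋₊)) ⁻¹' {a} =
      {x : ℝ | Fin.ofNat M ⌊x * M⌋₊ = e a} := by
    ext x; simp [Equiv.symm_apply_eq]
  rw [← Measure.restrict_congr_set Ico_ae_eq_Icc, Measure.restrict_apply (hp (.singleton a)),
    hfib, setOf_ofNat_floor_eq_inter_Ico, Real.volume_Ico, ← sub_div, add_sub_cancel_left,
    ENNReal.ofReal_div_of_pos (by positivity), ENNReal.ofReal_one, ENNReal.ofReal_natCast, one_div]

lemma abs_rpow_sub_one_le {x r : ℝ} (hx : 0 ≤ x) (hr₀ : 0 ≤ r) (hr₁ : r ≤ 1) :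
    |x ^ r - 1| ≤ |x - 1| := by
  have h₁ := le_abs_self (x - 1)
  have h₂ := neg_abs_le (x - 1)
  rcases le_total x 1 with hx1 | hx1
  · have := Real.self_le_rpow_of_le_one hx hx1 hr₁
    have := Real.rpow_le_one hx hx1 hr₀
    exact abs_le.2 ⟨by linarith, by linarith⟩
  · have := Real.one_le_rpow hx1 hr₀
    have := Real.rpow_le_self_of_one_le hx1 hr₁
    exact abs_le.2 ⟨by linarith, by linarith⟩

lemma abs_inv_sub_one_le {r δ : ℝ} (hr : |r - 1| ≤ δ) (hδ : δ ≤ 1 / 2) :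
    |r⁻¹ - 1| ≤ 2 * δ := by
  have hr0 : 1 / 2 ≤ r := by linarith [neg_abs_le (r - 1)]
  rw [show r⁻¹ - 1 = (1 - r) / r by field_simp, abs_div, abs_sub_comm 1 r,
    abs_of_pos (by linarith : (0 : ℝ) < r), div_le_iff₀ (by linarith)]
  nlinarith [abs_nonneg (r - 1)]

section Rnorm

variable {V : Type} [Fintype V] (H : SimpleGraph V)

lemma homDensity_abs_nonneg {Ω : Type*} [MeasurableSpace Ω] (μ : Measure Ω)
    (W : Ω → Ω → ℝ) : 0 ≤ homDensity H μ fun x y => |W x y| := by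
  classical
  refine integral_nonneg fun x => ?_
  rw [finprod_mem_eq_toFinset_prod]
  exact prod_nonneg fun e _ => le_sym2Val (fun _ _ => abs_nonneg _) x e

lemma rnorm_nonneg (W : ℝ → ℝ → ℝ) : 0 ≤ rnorm H W :=
  Real.rpow_nonneg (homDensity_abs_nonneg H _ W) _

lemma rnorm_const_mul (hE : H.edgeSet.ncard ≠ 0) (c : ℝ) (W : ℝ → ℝ → ℝ) :
    rnorm H (fun x y => c * W x y) = |c| * rnorm H W := by
  classical
  have hprod : ∀ x : V → ℝ, ∏ e ∈ H.edgeSet.toFinset, sym2Val (fun a b => |c * W a b|) x e =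
      |c| ^ H.edgeSet.ncard * ∏ e ∈ H.edgeSet.toFinset, sym2Val (fun a b => |W a b|) x e :=
    fun x => by
      simp only [abs_mul, sym2Val_const_mul, prod_mul_distrib, prod_const,
        Set.ncard_eq_toFinset_card']
  have hdens : homDensity H (volume.restrict (Set.Icc (0 : ℝ) 1)) (fun x y => |c * W x y|) =
      |c| ^ H.edgeSet.ncard *
        homDensity H (volume.restrict (Set.Icc (0 : ℝ) 1)) fun x y => |W x y| := by
    simp only [homDensity, finprod_mem_eq_toFinset_prod, hprod, integral_const_mul]
  rw [rnorm, rnorm, hdens, Real.mul_rpow (by positivity) (homDensity_abs_nonneg H _ W), one_div,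
    Real.pow_rpow_inv_natCast (abs_nonneg c) hE]

lemma rnorm_inv_rnorm_mul (hE : H.edgeSet.ncard ≠ 0) {W : ℝ → ℝ → ℝ} (hW : rnorm H W ≠ 0) :
    rnorm H (fun x y => (rnorm H W)⁻¹ * W x y) = 1 := by
  rw [rnorm_const_mul H hE, abs_inv, abs_of_nonneg (rnorm_nonneg H W), inv_mul_cancel₀ hW]

variable [DecidableEq V] [Fintype H.edgeSet] {α : Type*} [Fintype α] [MeasurableSpace α]
  [MeasurableSingletonClass α]

lemma rnorm_comp {p : ℝ → α} (hp : Measurable p)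
    (hfib : ∀ a, volume.restrict (Set.Icc (0 : ℝ) 1) (p ⁻¹' {a}) = (Fintype.card α : ℝ≥0∞)⁻¹)
    (G : α → α → ℝ) :
    rnorm H (fun x y => G (p x) (p y)) =
      finHomDensity H.edgeFinset (fun a b => |G a b|) ^ (1 / (H.edgeSet.ncard : ℝ)) :=
  congrArg (· ^ _) (homDensity_comp H hp hfib fun a b => |G a b|)

lemma le_rnorm_comp (hE : H.edgeSet.ncard ≠ 0) {p : ℝ → α} (hp : Measurable p)
    (hfib : ∀ a, volume.restrict (Set.Icc (0 : ℝ) 1) (p ⁻¹' {a}) = (Fintype.card α : ℝ≥0∞)⁻¹)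
    {G : α → α → ℝ} {c : ℝ} (hc : 0 ≤ c) (hG : ∀ a b, c ≤ |G a b|) :
    c ≤ rnorm H (fun x y => G (p x) (p y)) := by
  have : Nonempty α := ⟨p 0⟩
  have hdens : c ^ H.edgeSet.ncard ≤ finHomDensity H.edgeFinset fun a b => |G a b| :=
    le_expect univ_nonempty fun β _ => by
      rw [Set.ncard_eq_toFinset_card', ← prod_const]
      exact prod_le_prod (fun _ _ => hc) fun e _ => le_sym2Val hG β e
  rw [rnorm_comp H hp hfib, ← Real.pow_rpow_inv_natCast hc hE, ← one_div]
  exact Real.rpow_le_rpow (by positivity) hdens (by positivity)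

lemma abs_rnorm_one_add_mul_innerSign_sub_one_le (hE : H.edgeSet.ncard ≠ 0) {N : ℕ}
    {p : ℝ → (Fin N → Bool)} (hp : Measurable p)
    (hfib : ∀ a, volume.restrict (Set.Icc (0 : ℝ) 1) (p ⁻¹' {a}) =
      (Fintype.card (Fin N → Bool) : ℝ≥0∞)⁻¹) {τ : ℝ} (hτ : |τ| ≤ 1) :
    |rnorm H (fun x y => 1 + τ * innerSign N (p x) (p y)) - 1| ≤
      2 ^ H.edgeSet.ncard * (1 - 2 / 2 ^ Fintype.card V) ^ N := by
  obtain ⟨e, -⟩ := Set.nonempty_of_ncard_ne_zero hE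
  have : Nonempty V := ⟨(Quot.out e).1⟩
  have hpos : ∀ a b, 0 ≤ 1 + τ * innerSign N a b := fun a b => by
    have := neg_abs_le (τ * innerSign N a b)
    rw [abs_mul, abs_innerSign, mul_one] at this
    linarith
  have hT := abs_finHomDensity_one_add_mul_innerSign_sub_one_le
    (fun e he => H.not_isDiag_of_mem_edgeSet (Set.mem_toFinset.1 he)) hτ N
  rw [rnorm_comp H hp hfib fun a b => 1 + τ * innerSign N a b,
    funext₂ fun a b => abs_of_nonneg (hpos a b)]
  rw [← Set.ncard_eq_toFinset_card'] at hT
  refine (abs_rpow_sub_one_le ?_ (by positivity) ?_).trans hT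
  · exact expect_nonneg fun β _ => prod_nonneg fun e _ => le_sym2Val hpos β e
  · rw [one_div]
    exact inv_le_one_of_one_le₀ (Nat.one_le_cast.2 (Nat.one_le_iff_ne_zero.2 hE))

end Rnorm

lemma exists_rnorm_one_add_mul_innerSign_near_one {V : Type} [Fintype V] (H : SimpleGraph V)
    (hE : H.edgeSet.ncard ≠ 0) {δ : ℝ} (hδ : 0 < δ) :
    ∃ N, ∃ p : ℝ → (Fin N → Bool), Measurable p ∧
      (∀ a, volume.restrict (Set.Icc (0 : ℝ) 1) (p ⁻¹' {a}) =
        (Fintype.card (Fin N → Bool) : ℝ≥0∞)⁻¹) ∧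
      ∀ τ, |τ| ≤ 1 → |rnorm H (fun x y => 1 + τ * innerSign N (p x) (p y)) - 1| ≤ δ := by
  classical
  obtain ⟨N, hN⟩ := exists_pow_lt_of_lt_one (div_pos hδ (pow_pos two_pos H.edgeSet.ncard))
    (sub_lt_self 1 (by positivity : (0 : ℝ) < 2 / 2 ^ Fintype.card V))
  obtain ⟨p, hp, hfib⟩ := exists_measurable_fiber_eq_inv_card (Fin N → Bool)
  refine ⟨N, p, hp, hfib, fun τ hτ => ?_⟩
  exact (abs_rnorm_one_add_mul_innerSign_sub_one_le H hE hp hfib hτ).trans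
    (lt_div_iff₀' (by positivity) |>.1 hN).le

lemma goodKernel_comp {Ω α : Type*} [MeasurableSpace Ω] [Fintype α] [MeasurableSpace α]
    [MeasurableSingletonClass α] {p : Ω → α} (hp : Measurable p) {G : α → α → ℝ}
    (hG : ∀ a b, G a b = G b a) : GoodKernel fun x y => G (p x) (p y) := by
  obtain ⟨C, hC⟩ := (Set.finite_range fun q : α × α => |G q.1 q.2|).bddAbove
  exact ⟨(Measurable.of_discrete (f := fun q : α × α => G q.1 q.2)).comp (hp.prodMap hp),
    fun x y => hG _ _, C, fun x y => hC ⟨(p x, p y), rfl⟩⟩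

lemma goodKernel_const_mul_one_add_mul_innerSign {Ω : Type*} [MeasurableSpace Ω] {N : ℕ}
    {p : Ω → (Fin N → Bool)} (hp : Measurable p) (c τ : ℝ) :
    GoodKernel fun x y => c * (1 + τ * innerSign N (p x) (p y)) :=
  goodKernel_comp hp (G := fun a b => c * (1 + τ * innerSign N a b)) fun a b => by
    rw [innerSign_comm]

lemma le_abs_mul_one_add_sub_mul_one_sub {ε δ u v s : ℝ} (hs : s = 1 ∨ s = -1) (hε : ε ≤ 1)
    (hu : |u - 1| ≤ 2 * δ) (hv : |v - 1| ≤ 2 * δ) (hδ : 4 * δ ≤ ε) :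
    ε ≤ |u * (1 + ε * s) - v * (1 + -ε * s)| := by
  obtain ⟨hu₁, hu₂⟩ := abs_le.1 hu
  obtain ⟨hv₁, hv₂⟩ := abs_le.1 hv
  have hε0 : 0 ≤ ε := by linarith [abs_nonneg (u - 1)]
  rcases hs with rfl | rfl
  · exact le_abs.2 (Or.inl (by nlinarith))
  · exact le_abs.2 (Or.inr (by nlinarith))

lemma le_abs_midpoint_mul_one_add_mul_one_sub {ε δ u v s : ℝ} (hs : s = 1 ∨ s = -1)
    (hε₀ : 0 ≤ ε) (hε₁ : ε ≤ 1) (hu : |u - 1| ≤ 2 * δ) (hv : |v - 1| ≤ 2 * δ) :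
    1 - 2 * δ ≤ |(u * (1 + ε * s) + v * (1 + -ε * s)) / 2| := by
  obtain ⟨hu₁, -⟩ := abs_le.1 hu
  obtain ⟨hv₁, -⟩ := abs_le.1 hv
  rcases hs with rfl | rfl <;> exact le_abs.2 (Or.inl (by nlinarith))

theorem rnorm_modulus_of_convexity_zero_general {V : Type} [Fintype V]
    (H : SimpleGraph V) (hE : H.edgeSet.ncard ≠ 0)
    (ε : ℝ) (hε : ε ∈ Set.Ioo (0 : ℝ) 1) (η : ℝ) (hη : 0 < η) :
    ∃ W₁ W₂ : ℝ → ℝ → ℝ, GoodKernel W₁ ∧ GoodKernel W₂ ∧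
      rnorm H W₁ = 1 ∧ rnorm H W₂ = 1 ∧
      ε ≤ rnorm H (fun x y => W₁ x y - W₂ x y) ∧
      1 - rnorm H (fun x y => (W₁ x y + W₂ x y) / 2) < η := by
  classical
  obtain ⟨hε₀, hε₁⟩ := hε
  obtain ⟨δ, hδ₀, hδε, hδη⟩ : ∃ δ : ℝ, 0 < δ ∧ 4 * δ ≤ ε ∧ 2 * δ < η :=
    ⟨min (ε / 4) (η / 3), by positivity, by linarith [min_le_left (ε / 4) (η / 3)],
      by linarith [min_le_right (ε / 4) (η / 3)]⟩
  obtain ⟨N, p, hp, hfib, hK⟩ := exists_rnorm_one_add_mul_innerSign_near_one H hE hδ₀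
  set r₁ := rnorm H fun x y => 1 + ε * innerSign N (p x) (p y)
  set r₂ := rnorm H fun x y => 1 + -ε * innerSign N (p x) (p y)
  have h₁ : |r₁ - 1| ≤ δ := hK ε (abs_le.2 ⟨by linarith, hε₁.le⟩)
  have h₂ : |r₂ - 1| ≤ δ := hK (-ε) (abs_le.2 ⟨by linarith, by linarith⟩)
  have hu := abs_inv_sub_one_le h₁ (by linarith)
  have hv := abs_inv_sub_one_le h₂ (by linarith)
  refine ⟨fun x y => r₁⁻¹ * (1 + ε * innerSign N (p x) (p y)),
    fun x y => r₂⁻¹ * (1 + -ε * innerSign N (p x) (p y)),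
    goodKernel_const_mul_one_add_mul_innerSign hp _ _,
    goodKernel_const_mul_one_add_mul_innerSign hp _ _,
    rnorm_inv_rnorm_mul H hE (by linarith [neg_abs_le (r₁ - 1)] : 0 < r₁).ne',
    rnorm_inv_rnorm_mul H hE (by linarith [neg_abs_le (r₂ - 1)] : 0 < r₂).ne',
    le_rnorm_comp H hE hp hfib hε₀.le fun a b =>
      le_abs_mul_one_add_sub_mul_one_sub (innerSign_eq_one_or_eq_neg_one N a b) hε₁.le hu hv hδε,
    ?_⟩
  have hmid := le_rnorm_comp H hE hp hfib (by linarith) fun a b =>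
    le_abs_midpoint_mul_one_add_mul_one_sub (innerSign_eq_one_or_eq_neg_one N a b) hε₀.le hε₁.le
      hu hv
  linarith

/-- For a weakly norming graph `H` (with at least one edge), the modulus of convexity of
`(W_{r(H)}, ‖·‖_{r(H)})` vanishes on `(0,1)`: for every `ε ∈ (0,1)` and `η > 0` there are
unit vectors `W₁, W₂` with `‖W₁ - W₂‖ ≥ ε` and `1 - ‖(W₁+W₂)/2‖ < η`.  In particular the
space is not uniformly convex. -/
theorem rnorm_modulus_of_convexity_zero {V : Type} [Fintype V]
    (H : SimpleGraph V) (hH : WeaklyNorming H) (hE : H.edgeSet.ncard ≠ 0)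
    (ε : ℝ) (hε : ε ∈ Set.Ioo (0 : ℝ) 1) (η : ℝ) (hη : 0 < η) :
    ∃ W₁ W₂ : ℝ → ℝ → ℝ, GoodKernel W₁ ∧ GoodKernel W₂ ∧
      rnorm H W₁ = 1 ∧ rnorm H W₂ = 1 ∧
      ε ≤ rnorm H (fun x y => W₁ x y - W₂ x y) ∧
      1 - rnorm H (fun x y => (W₁ x y + W₂ x y) / 2) < η :=
  rnorm_modulus_of_convexity_zero_general H hE ε hε η hη
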